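/- Let c be the complex Banach space of convergent sequences with the supremum norm, and for each k ∈ ℕ let L_k ∈ c* be given by L_k((c_n)_n) = (lim_{n→∞} c_n - c_k)/2, so each L_k has norm at most one. Then for every finite rank bounded linear operator S : c → c, the norms ‖S*(L_k)‖ converge to 0 as k → ∞. -/

import Mathlib

open Metric Filter Topology

namespace ClusterValue

variable (X : Type*) [NormedAddCommGroup X] [NormedSpace ℂ X]

/-- Membership in `A_u(B)`: analytic on the open unit ball, bounded there,
and uniformly continuous there. -/
def MemAu (f : X → ℂ) : Prop :=
  AnalyticOn ℂ f (ball (0 : X) 1) ∧ (∃ C : ℝ, ∀ x ∈ ball (0 : X) 1, ‖f x‖ ≤ C) ∧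
    UniformContinuousOn f (ball (0 : X) 1)

/-- Membership in `H^∞(B)`: analytic on the open unit ball and bounded there. -/
def MemHinf (f : X → ℂ) : Prop :=
  AnalyticOn ℂ f (ball (0 : X) 1) ∧ (∃ C : ℝ, ∀ x ∈ ball (0 : X) 1, ‖f x‖ ≤ C)

/-- A character (nonzero continuous multiplicative linear functional) of the algebra
of functions on the open unit ball of `X` determined by the membership predicate `Mem`.
Functions are identified when they agree on the ball. -/
structure Character (Mem : (X → ℂ) → Prop) : Type _ where
  toFun : (X → ℂ) → ℂ
  congr' : ∀ f g, Mem f → Mem g → (∀ x ∈ ball (0 : X) 1, f x = g x) → toFun f = toFun g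
  map_add' : ∀ f g, Mem f → Mem g → toFun (f + g) = toFun f + toFun g
  map_mul' : ∀ f g, Mem f → Mem g → toFun (f * g) = toFun f * toFun g
  map_smul' : ∀ (c : ℂ) (f), Mem f → toFun (c • f) = c * toFun f
  map_one' : toFun 1 = 1
  continuous' : ∃ C : ℝ, ∀ (f : X → ℂ) (M : ℝ), Mem f →
    (∀ x ∈ ball (0 : X) 1, ‖f x‖ ≤ M) → ‖toFun f‖ ≤ C * M

variable {X}

/-- The fiber over `0`: characters annihilating all continuous linear functionals. -/
def Character.inFiberZero {Mem : (X → ℂ) → Prop} (τ : Character X Mem) : Prop :=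
  ∀ φ : X →L[ℂ] ℂ, τ.toFun ⇑φ = 0

/-- The fiber over `x'' ∈ X**`. -/
def Character.inFiber {Mem : (X → ℂ) → Prop} (τ : Character X Mem)
    (x'' : (X →L[ℂ] ℂ) →L[ℂ] ℂ) : Prop :=
  ∀ φ : X →L[ℂ] ℂ, τ.toFun ⇑φ = x'' φ

variable (X)

/-- The cluster set of `f` at `0`: limits of `f` along weakly null nets (filters) in the ball. -/
def clusterSetZero (f : X → ℂ) : Set ℂ :=
  {z | ∃ l : Filter X, l.NeBot ∧ l ≤ 𝓟 (ball (0 : X) 1) ∧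
    (∀ φ : X →L[ℂ] ℂ, Tendsto (fun x => φ x) l (𝓝 0)) ∧ Tendsto f l (𝓝 z)}

/-- The cluster set of `f` at `x'' ∈ X**`: limits of `f` along nets in the ball converging
weak-star to `x''`. -/
def clusterSet (f : X → ℂ) (x'' : (X →L[ℂ] ℂ) →L[ℂ] ℂ) : Set ℂ :=
  {z | ∃ l : Filter X, l.NeBot ∧ l ≤ 𝓟 (ball (0 : X) 1) ∧
    (∀ φ : X →L[ℂ] ℂ, Tendsto (fun x => φ x) l (𝓝 (x'' φ))) ∧ Tendsto f l (𝓝 z)}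

/-- A finite rank (bounded linear) operator. -/
def FiniteRank (S : X →L[ℂ] X) : Prop :=
  FiniteDimensional ℂ ↥(LinearMap.range (S : X →ₗ[ℂ] X))

/-- Finite type polynomials: the subalgebra of functions generated by the
continuous linear functionals (and constants). -/
def IsFiniteTypePoly (p : X → ℂ) : Prop :=
  p ∈ Algebra.adjoin ℂ (Set.range fun φ : X →L[ℂ] ℂ => (⇑φ : X → ℂ))

/-- Membership in `A(B)`: uniform limits on the ball of finite type polynomials. -/
def MemA (f : X → ℂ) : Prop :=
  ∀ ε > (0 : ℝ), ∃ p : X → ℂ, IsFiniteTypePoly X p ∧ ∀ x ∈ ball (0 : X) 1, ‖f x - p x‖ ≤ ε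

/-- A continuous polynomial: a finite sum of (diagonals of) continuous multilinear maps. -/
def IsContPoly (p : X → ℂ) : Prop :=
  ∃ (N : ℕ) (M : ∀ k : ℕ, ContinuousMultilinearMap ℂ (fun _ : Fin k => X) ℂ),
    ∀ x, p x = ∑ k ∈ Finset.range N, M k (fun _ => x)

end ClusterValue

namespace ClusterValue

open Filter Topology ENNReal

/-- The space `c` of convergent sequences, as a (closed) subspace of `ℓ∞`. -/
noncomputable def convSeq : Submodule ℂ (lp (fun _ : ℕ => ℂ) ∞) where
  carrier := {x | ∃ l : ℂ, Tendsto (fun n => x n) atTop (𝓝 l)}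
  add_mem' := by
    rintro x y ⟨l, hl⟩ ⟨m, hm⟩
    exact ⟨l + m, by simpa using hl.add hm⟩
  zero_mem' := ⟨0, by simp [tendsto_const_nhds]⟩
  smul_mem' := by
    rintro c x ⟨l, hl⟩
    refine ⟨c * l, ?_⟩
    simpa using (hl.const_mul c)

end ClusterValue


/-!
Since `x k → lim x`, the functionals `L k` tend to `0` pointwise on `c`. Restricted to the
finite-dimensional range of `S`, pointwise convergence of functionals is norm convergence, and
`‖S*(L k)‖ ≤ ‖L k|_{ran S}‖ ‖S‖`.
-/

section FiniteRank

variable {𝕜 E F G ι : Type*} [NontriviallyNormedField 𝕜] [CompleteSpace 𝕜]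
  [NormedAddCommGroup E] [NormedSpace 𝕜 E] [NormedAddCommGroup F] [NormedSpace 𝕜 F]
  [NormedAddCommGroup G] [NormedSpace 𝕜 G] {l : Filter ι}

theorem ContinuousLinearMap.tendsto_of_tendsto_apply [FiniteDimensional 𝕜 E]
    {f : ι → E →L[𝕜] F} {g : E →L[𝕜] F} (h : ∀ y, Tendsto (f · y) l (𝓝 (g y))) :
    Tendsto f l (𝓝 g) := by
  let e : (E →L[𝕜] F) ≃L[𝕜] Fin (Module.finrank 𝕜 E) → F :=
    ((ContinuousLinearEquiv.ofFinrankEq (Module.finrank_fin_fun 𝕜).symm).arrowCongr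
      (1 : F ≃L[𝕜] F)).trans (ContinuousLinearEquiv.piRing _)
  rw [e.toHomeomorph.isInducing.tendsto_nhds_iff]
  exact tendsto_pi_nhds.mpr fun i ↦ h _

theorem ContinuousLinearMap.tendsto_norm_comp_of_finiteDimensional_range
    (S : E →L[𝕜] F) [FiniteDimensional 𝕜 (LinearMap.range (S : E →ₗ[𝕜] F))]
    {L : ι → F →L[𝕜] G} (hL : ∀ y, Tendsto (L · y) l (𝓝 0)) :
    Tendsto (fun k ↦ ‖(L k).comp S‖) l (𝓝 0) := by
  set R := LinearMap.range (S : E →ₗ[𝕜] F)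
  let S' : E →L[𝕜] R := S.codRestrict R (LinearMap.mem_range_self _)
  have hLR : Tendsto (fun k ↦ (L k).comp R.subtypeL) l (𝓝 0) :=
    tendsto_of_tendsto_apply fun y ↦ hL y
  refine squeeze_zero (fun _ ↦ norm_nonneg _)
    (fun k ↦ opNorm_comp_le ((L k).comp R.subtypeL) S') ?_
  simpa using (tendsto_zero_iff_norm_tendsto_zero.mp hLR).mul_const ‖S'‖

end FiniteRank

namespace ClusterValue

open ENNReal

local notation "ℓ∞" => lp (fun _ : ℕ ↦ ℂ) ∞

theorem norm_le_one_of_eq_lim_sub_apply_div_two (φ : ↥convSeq →L[ℂ] ℂ) (k : ℕ)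
    (hφ : ∀ (x : ↥convSeq) (l : ℂ),
      Tendsto (fun n ↦ (x : ℓ∞) n) atTop (𝓝 l) → φ x = (l - (x : ℓ∞) k) / 2) :
    ‖φ‖ ≤ 1 := by
  refine φ.opNorm_le_bound zero_le_one fun x ↦ ?_
  obtain ⟨l, hl⟩ := x.2
  have hxk : ‖(x : ℓ∞) k‖ ≤ ‖x‖ := lp.norm_apply_le_norm top_ne_zero _ k
  have hlim : ‖l‖ ≤ ‖x‖ :=
    le_of_tendsto hl.norm (.of_forall fun n ↦ lp.norm_apply_le_norm top_ne_zero _ n)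
  calc ‖φ x‖ = ‖l - (x : ℓ∞) k‖ / 2 := by rw [hφ x l hl, norm_div, RCLike.norm_two]
    _ ≤ (‖l‖ + ‖(x : ℓ∞) k‖) / 2 := by gcongr; exact norm_sub_le _ _
    _ ≤ 1 * ‖x‖ := by linarith

theorem tendsto_zero_of_eq_lim_sub_apply_div_two (L : ℕ → (↥convSeq →L[ℂ] ℂ))
    (hL : ∀ (k : ℕ) (x : ↥convSeq) (l : ℂ),
      Tendsto (fun n ↦ (x : ℓ∞) n) atTop (𝓝 l) → L k x = (l - (x : ℓ∞) k) / 2)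
    (x : ↥convSeq) : Tendsto (L · x) atTop (𝓝 0) := by
  obtain ⟨l, hl⟩ := x.2
  have hlim : Tendsto (fun k ↦ (l - (x : ℓ∞) k) / 2) atTop (𝓝 ((l - l) / 2)) :=
    (tendsto_const_nhds.sub hl).div_const 2
  simpa [hL _ x l hl] using hlim

end ClusterValue

open Metric Filter Topology ENNReal ClusterValue in
/-- Let `L k ∈ c*` be given by `L k x = (lim x - x k) / 2`; each `L k` has norm at most one.
Then for every finite rank operator `S : c → c`, `‖S*(L k)‖ → 0` as `k → ∞`. -/
theorem statement7 (L : ℕ → (↥convSeq →L[ℂ] ℂ))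
    (hL : ∀ (k : ℕ) (x : ↥convSeq) (l : ℂ),
      Tendsto (fun n => (x : lp (fun _ : ℕ => ℂ) ∞) n) atTop (𝓝 l) →
      L k x = (l - (x : lp (fun _ : ℕ => ℂ) ∞) k) / 2)
    (S : ↥convSeq →L[ℂ] ↥convSeq) (hS : FiniteRank ↥convSeq S) :
    (∀ k, ‖L k‖ ≤ 1) ∧ Tendsto (fun k => ‖(L k).comp S‖) atTop (𝓝 0) := by
  have : FiniteDimensional ℂ (LinearMap.range (S : ↥convSeq →ₗ[ℂ] ↥convSeq)) := hS
  exact ⟨fun k ↦ norm_le_one_of_eq_lim_sub_apply_div_two (L k) k (hL k),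
    S.tendsto_norm_comp_of_finiteDimensional_range
      (tendsto_zero_of_eq_lim_sub_apply_div_two L hL)⟩
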